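/- arXiv:1801.02262 — 3 statements merged into one kernel-verified Lean document; each statement's English description precedes it below -/
import Mathlib

section
/- Let n ≥ 3 and c ∈ {1, ..., 2n+1}. If the 2n elements of {1,...,2n+1} \ {c} can be partitioned into n pairs all having the same sum, then c ∈ {1, n+1, 2n+1}. -/
/-!
Summing `x + g x = s` over the `2n` remaining numbers counts each of them twice, so
`n * s + c = 1 + 2 + ⋯ + (2n+1) = (2n+1)(n+1) ≡ 1 [MOD n]`. Hence `c ≡ 1 [MOD n]`, and the only
such numbers in `[1, 2n+1]` are `1`, `n+1` and `2n+1`.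
-/

open Finset

lemma Finset.two_nsmul_sum_eq_card_nsmul_of_involution {α M : Type*} [AddCommMonoid M]
    {S : Finset α} {f : α → M} {g : α → α} {s : M} (hmaps : ∀ x ∈ S, g x ∈ S)
    (hinv : ∀ x ∈ S, g (g x) = x) (hsum : ∀ x ∈ S, f x + f (g x) = s) :
    2 • ∑ x ∈ S, f x = #S • s := by
  have hperm : ∑ x ∈ S, f (g x) = ∑ x ∈ S, f x :=
    sum_nbij' g g hmaps hmaps hinv hinv fun _ _ => rfl
  calc 2 • ∑ x ∈ S, f x = ∑ x ∈ S, (f x + f (g x)) := by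
        rw [sum_add_distrib, hperm, two_nsmul]
    _ = #S • s := by rw [sum_congr rfl hsum, sum_const]

lemma Finset.sum_Icc_one_id_mul_two (m : ℕ) : (∑ i ∈ Icc 1 m, i) * 2 = m * (m + 1) := by
  induction m with
  | zero => simp
  | succ m ih =>
    rw [sum_Icc_succ_top (by omega), add_mul, ih]
    ring

lemma Nat.eq_one_or_eq_add_one_or_eq_two_mul_add_one_of_modEq_one {n c : ℕ} (hc₁ : 1 ≤ c)
    (hc₂ : c ≤ 2 * n + 1) (hmod : c ≡ 1 [MOD n]) : c = 1 ∨ c = n + 1 ∨ c = 2 * n + 1 := by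
  obtain ⟨k, hk⟩ : n ∣ c - 1 := (Nat.modEq_iff_dvd' hc₁).1 hmod.symm
  rcases Nat.eq_zero_or_pos n with rfl | hn
  · omega
  have hk₂ : k ≤ 2 := Nat.le_of_mul_le_mul_left (by omega : n * k ≤ n * 2) hn
  interval_cases k <;> omega

theorem center_candidates_general (n c : ℕ) (hc : c ∈ Finset.Icc 1 (2 * n + 1))
    (h : ∃ s : ℕ, ∃ g : ℕ → ℕ, ∀ x ∈ (Finset.Icc 1 (2 * n + 1)).erase c,
        g x ∈ (Finset.Icc 1 (2 * n + 1)).erase c ∧ g x ≠ x ∧ g (g x) = x ∧ x + g x = s) :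
    c = 1 ∨ c = n + 1 ∨ c = 2 * n + 1 := by
  obtain ⟨s, g, hg⟩ := h
  have hpairs := Finset.two_nsmul_sum_eq_card_nsmul_of_involution (f := id)
    (fun x hx => (hg x hx).1) (fun x hx => (hg x hx).2.2.1) (fun x hx => (hg x hx).2.2.2)
  have hcard : #((Icc 1 (2 * n + 1)).erase c) = 2 * n := by
    rw [card_erase_of_mem hc, Nat.card_Icc]
    omega
  have htotal := sum_Icc_one_id_mul_two (2 * n + 1)
  rw [← sum_erase_add _ _ hc] at htotal
  simp only [id, smul_eq_mul, hcard] at hpairs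
  have hkey : c + n * s = 1 + n * (2 * n + 3) := by nlinarith
  have hmod : c ≡ 1 [MOD n] := by
    simpa [Nat.ModEq, Nat.add_mul_mod_self_left] using congrArg (· % n) hkey
  rw [mem_Icc] at hc
  exact Nat.eq_one_or_eq_add_one_or_eq_two_mul_add_one_of_modEq_one hc.1 hc.2 hmod

theorem center_candidates (n c : ℕ) (hn : 3 ≤ n) (hc : c ∈ Finset.Icc 1 (2 * n + 1))
    (h : ∃ s : ℕ, ∃ g : ℕ → ℕ, ∀ x ∈ (Finset.Icc 1 (2 * n + 1)).erase c,
        g x ∈ (Finset.Icc 1 (2 * n + 1)).erase c ∧ g x ≠ x ∧ g (g x) = x ∧ x + g x = s) :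
    c = 1 ∨ c = n + 1 ∨ c = 2 * n + 1 :=
  center_candidates_general n c hc h
end

section
/- For n ≥ 3, if the center of a magic n-gon were c = 1 (so the magic sum would be m = 2n + 4), then the diagonal containing the value 2 would force two distinct values from {3, ..., 2n} to sum to 3, which is impossible. Hence c ≠ 1. -/
/-! The labels are a permutation of `1, ..., 2n+1`, so adding up the `n` diagonals gives
`n s = (n+1)(2n+1) + (n-1) c`; for `c = 1` this forces `s = 2n+4`. The label `2n+1` is not the
center, so it lies on a side whose other two labels, both at least `2`, would have to sum to `3`. -/

/-- A magic `n`-gon: values `v i` at vertices, `m i` at the midpoint of the side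
between `v i` and `v (i+1)`, and `c` at the center, all drawn injectively from
`{1, ..., 2n+1}`, such that every side sums to `s` and every diagonal (through
the center) sums to `s`.  For even `n` the diagonals join opposite vertices and
opposite midpoints; for odd `n` they join each vertex to the opposite midpoint. -/
def IsMagicNGon (n : ℕ) [NeZero n] (v m : ZMod n → ℕ) (c s : ℕ) : Prop :=
  Function.Injective (Sum.elim v (Sum.elim m (fun _ : Unit => c))) ∧
  (∀ i, v i ∈ Finset.Icc 1 (2 * n + 1)) ∧
  (∀ i, m i ∈ Finset.Icc 1 (2 * n + 1)) ∧
  c ∈ Finset.Icc 1 (2 * n + 1) ∧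
  (∀ i, v i + m i + v (i + 1) = s) ∧
  (if n % 2 = 0
    then ∀ i, v i + c + v (i + (n / 2 : ℕ)) = s ∧ m i + c + m (i + (n / 2 : ℕ)) = s
    else ∀ i, v i + c + m (i + (n / 2 : ℕ)) = s)

theorem Finset.image_univ_eq_of_injective {α β : Type*} [Fintype α] [DecidableEq β]
    {f : α → β} {t : Finset β} (hf : Function.Injective f) (hmem : ∀ x, f x ∈ t)
    (hcard : t.card ≤ Fintype.card α) : Finset.univ.image f = t :=
  Finset.eq_of_subset_of_card_le (by simpa [Finset.subset_iff] using hmem)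
    (by rwa [Finset.card_image_of_injective _ hf, Finset.card_univ])

theorem Finset.sum_Icc_one_id_mul_two_s3 (N : ℕ) : (∑ k ∈ Finset.Icc 1 N, k) * 2 = N * (N + 1) := by
  induction N with
  | zero => rfl
  | succ N ih => rw [Finset.sum_Icc_succ_top (by omega), add_mul, ih]; ring

theorem ZMod.sum_add_const_add_shift {n : ℕ} [NeZero n] {f g : ZMod n → ℕ} {c s : ℕ}
    (k : ZMod n) (h : ∀ i, f i + c + g (i + k) = s) : ∑ i, f i + n * c + ∑ i, g i = n * s := by
  have hsum := Finset.sum_congr rfl fun i (_ : i ∈ Finset.univ) => h i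
  have hshift : ∑ i, g (i + k) = ∑ i, g i := Equiv.sum_comp (Equiv.addRight k) g
  simpa [Finset.sum_add_distrib, hshift, mul_comm] using hsum

abbrev ngonLabel {n : ℕ} (v m : ZMod n → ℕ) (c : ℕ) : ZMod n ⊕ (ZMod n ⊕ Unit) → ℕ :=
  Sum.elim v (Sum.elim m fun _ => c)

namespace IsMagicNGon

variable {n : ℕ} [NeZero n] {v m : ZMod n → ℕ} {c s : ℕ}

theorem image_label (h : IsMagicNGon n v m c s) :
    Finset.univ.image (ngonLabel v m c) = Finset.Icc 1 (2 * n + 1) := by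
  obtain ⟨hinj, hv, hm, hc, -⟩ := h
  refine Finset.image_univ_eq_of_injective hinj ?_ ?_
  · rintro (i | i | ⟨⟩)
    exacts [hv i, hm i, hc]
  · rw [Nat.card_Icc, Fintype.card_sum, Fintype.card_sum, ZMod.card, Fintype.card_unit]; omega

theorem exists_label_eq (h : IsMagicNGon n v m c s) {k : ℕ} (hk : k ∈ Finset.Icc 1 (2 * n + 1)) :
    ∃ x, ngonLabel v m c x = k := by
  simpa [← h.image_label] using hk

theorem sum_label_mul_two (h : IsMagicNGon n v m c s) :
    (∑ i, v i + ∑ i, m i + c) * 2 = (2 * n + 1) * (2 * n + 2) := by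
  have hsum : ∑ x, ngonLabel v m c x = ∑ k ∈ Finset.Icc 1 (2 * n + 1), k := by
    rw [← h.image_label, Finset.sum_image fun x _ y _ hxy => h.1 hxy]
  simp only [ngonLabel, Fintype.sum_sum_type, Finset.univ_unique, Finset.sum_singleton,
    Sum.elim_inl, Sum.elim_inr] at hsum
  rw [← add_assoc] at hsum
  rw [hsum, Finset.sum_Icc_one_id_mul_two_s3]

theorem mul_magicSum (h : IsMagicNGon n v m c s) :
    n * s = ∑ i, v i + ∑ i, m i + n * c := by
  have hdiag := h.2.2.2.2.2
  split_ifs at hdiag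
  · have hv := ZMod.sum_add_const_add_shift _ fun i => (hdiag i).1
    have hm := ZMod.sum_add_const_add_shift _ fun i => (hdiag i).2
    omega
  · have := ZMod.sum_add_const_add_shift _ hdiag
    omega

theorem magicSum_eq_of_center_eq_one (h : IsMagicNGon n v m 1 s) : s = 2 * n + 4 := by
  have hsum := h.sum_label_mul_two
  have hs := h.mul_magicSum
  refine Nat.eq_of_mul_eq_mul_left (NeZero.pos n) ?_
  nlinarith

theorem side_sum (h : IsMagicNGon n v m c s) (i : ZMod n) : v i + m i + v (i + 1) = s :=
  h.2.2.2.2.1 i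

theorem vertex_ne_center (h : IsMagicNGon n v m c s) (i : ZMod n) : v i ≠ c :=
  fun hi => Sum.inl_ne_inr (h.1 (a₁ := .inl i) (a₂ := .inr (.inr ())) hi)

theorem midpoint_ne_center (h : IsMagicNGon n v m c s) (i : ZMod n) : m i ≠ c :=
  fun hi => Sum.inl_ne_inr (Sum.inr_injective (h.1 (a₁ := .inr (.inl i)) (a₂ := .inr (.inr ())) hi))

theorem one_lt_vertex (h : IsMagicNGon n v m 1 s) (i : ZMod n) : 1 < v i :=
  lt_of_le_of_ne (Finset.mem_Icc.mp (h.2.1 i)).1 (h.vertex_ne_center i).symm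

theorem one_lt_midpoint (h : IsMagicNGon n v m 1 s) (i : ZMod n) : 1 < m i :=
  lt_of_le_of_ne (Finset.mem_Icc.mp (h.2.2.1 i)).1 (h.midpoint_ne_center i).symm

end IsMagicNGon

theorem center_ne_one_general (n : ℕ) [NeZero n] :
    (∀ a b : ℕ, a ∈ Finset.Icc 3 (2 * n) → b ∈ Finset.Icc 3 (2 * n) → a ≠ b → a + b ≠ 3) ∧
    (∀ (v m : ZMod n → ℕ) (c s : ℕ), IsMagicNGon n v m c s → c ≠ 1) := by
  refine ⟨fun a b ha hb _ => by simp only [Finset.mem_Icc] at ha hb; omega, ?_⟩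
  rintro v m c s h rfl
  have hs := h.magicSum_eq_of_center_eq_one
  obtain ⟨x, hx⟩ := h.exists_label_eq (k := 2 * n + 1) (by simp)
  rcases x with j | j | ⟨⟩
  · have := h.side_sum j
    have := h.one_lt_midpoint j
    have := h.one_lt_vertex (j + 1)
    simp only [ngonLabel, Sum.elim_inl] at hx
    omega
  · have := h.side_sum j
    have := h.one_lt_vertex j
    have := h.one_lt_vertex (j + 1)
    simp only [ngonLabel, Sum.elim_inl, Sum.elim_inr] at hx
    omega
  · simp only [ngonLabel, Sum.elim_inr] at hx
    have := NeZero.pos n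
    omega

theorem center_ne_one (n : ℕ) [NeZero n] (hn : 3 ≤ n) :
    (∀ a b : ℕ, a ∈ Finset.Icc 3 (2 * n) → b ∈ Finset.Icc 3 (2 * n) → a ≠ b → a + b ≠ 3) ∧
    (∀ (v m : ZMod n → ℕ) (c s : ℕ), IsMagicNGon n v m c s → c ≠ 1) :=
  center_ne_one_general n
end

section
/- For even n ≥ 8: if n/2 is even then f*(m_{n/2}) = n/2 and f*(m_n) = 3n/2 + 2; if n/2 is odd then f*(m_{n/2}) = 3n/2 + 1 and f*(m_n) = n/2 + 1. In both cases f*(m_{n/2}) + f*(m_n) = 2n + 2. -/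
/-!
Write `n = 2k`. The midpoint `m_k` joins `v_k` to `v_{k+1}`, whose label is reflected from
`f*(v_1) = n - 1`, and `m_n` joins `v_n` (reflected from `v_k`) to `v_1`. Hence both midpoint
labels are determined by `f*(v_k)`: `f*(m_k) = 2n - f*(v_k)` and `f*(m_n) = f*(v_k) + 2`, so their
sum is always `2n + 2`, and the parity of `k` decides `f*(v_k)`.
-/

/-- The construction map on the first `n/2` vertices. -/
def fval (n i : ℕ) : ℕ :=
  if i = 1 then n - 1
  else if i = 2 then 2 * n + 1
  else if i % 2 = 0 then n + i
  else i - 1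

/-- The extended vertex labeling `f*` on all vertices `1 ≤ i ≤ n`. -/
def fv (n i : ℕ) : ℕ :=
  if i ≤ n / 2 then fval n i else 2 * n + 2 - fval n (i - n / 2)

/-- The midpoint labeling `f*(m_i) = 3n+3 - f*(v_i) - f*(v_{i+1})`, with `v_{n+1} = v_1`. -/
def fm (n i : ℕ) : ℕ :=
  3 * n + 3 - fv n i - fv n (if i = n then 1 else i + 1)

lemma fval_one (n : ℕ) : fval n 1 = n - 1 := by
  simp [fval]

lemma fval_of_even {n i : ℕ} (hi : 3 ≤ i) (he : i % 2 = 0) : fval n i = n + i := by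
  rw [fval, if_neg (by omega), if_neg (by omega), if_pos he]

lemma fval_of_odd {n i : ℕ} (hi : 3 ≤ i) (ho : i % 2 = 1) : fval n i = i - 1 := by
  rw [fval, if_neg (by omega), if_neg (by omega), if_neg (by omega)]

lemma fval_le {n i : ℕ} (hi : i ≤ n) : fval n i ≤ 2 * n + 1 := by
  unfold fval
  split_ifs <;> omega

section Halves

variable {k : ℕ}

lemma fv_of_le_half {i : ℕ} (hi : i ≤ k) : fv (2 * k) i = fval (2 * k) i := by
  rw [fv, Nat.mul_div_cancel_left k two_pos, if_pos hi]

lemma fv_add_half {i : ℕ} (hi : 1 ≤ i) :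
    fv (2 * k) (k + i) = 2 * (2 * k) + 2 - fval (2 * k) i := by
  rw [fv, Nat.mul_div_cancel_left k two_pos, if_neg (by omega), Nat.add_sub_cancel_left]

lemma fm_half (hk : 1 ≤ k) : fm (2 * k) k = 2 * (2 * k) - fval (2 * k) k := by
  rw [fm, if_neg (by omega), fv_of_le_half le_rfl, fv_add_half le_rfl, fval_one]
  omega

lemma fm_two_mul_self (hk : 1 ≤ k) : fm (2 * k) (2 * k) = fval (2 * k) k + 2 := by
  have hv : fv (2 * k) (2 * k) = 2 * (2 * k) + 2 - fval (2 * k) k := by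
    simpa only [← two_mul] using fv_add_half (k := k) hk
  rw [fm, if_pos rfl, hv, fv_of_le_half hk, fval_one]
  have := fval_le (n := 2 * k) (i := k) (by omega)
  omega

end Halves

theorem special_midpoints (n : ℕ) (hev : n % 2 = 0) (hn : 8 ≤ n) :
    ((n / 2) % 2 = 0 → fm n (n / 2) = n / 2 ∧ fm n n = 3 * n / 2 + 2) ∧
    ((n / 2) % 2 = 1 → fm n (n / 2) = 3 * n / 2 + 1 ∧ fm n n = n / 2 + 1) ∧
    fm n (n / 2) + fm n n = 2 * n + 2 := by
  obtain ⟨k, rfl⟩ : ∃ k, n = 2 * k := ⟨n / 2, by omega⟩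
  have hk : 3 ≤ k := by omega
  rw [Nat.mul_div_cancel_left k two_pos, fm_half (by omega), fm_two_mul_self (by omega)]
  rcases Nat.mod_two_eq_zero_or_one k with he | ho
  · rw [fval_of_even hk he]
    omega
  · rw [fval_of_odd hk ho]
    omega
end
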